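/- arXiv:2308.14314 — 2 statements merged into one kernel-verified Lean document; each statement's English description precedes it below -/
import Mathlib

section
/- For every k ≥ 1, the NSA iterates satisfy the Lyapunov inequality Δ_{k+1}/γ_{k+1} ≤ Δ_k/γ_k + (1/γ_{k+1} − α_k/γ_{k+1} − 1/γ_k)·δ_k − (η/(6γ_{k+1}))·‖∇f(y_k)‖². -/
/-!
Expanding the `z`-update gives
`γₖ₊₁/2 ‖zₖ₊₁ - x*‖² = γₖ₊₁/2 ‖zₖ - x*‖² + αₖ ⟪∇f(yₖ), x* - zₖ⟫ + η/2 ‖∇f(yₖ)‖²`.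
Because `yₖ = (1 - αₖ) xₖ + αₖ zₖ`, the gradient inequalities of the convex `f` at `yₖ` towards
`xₖ` and towards `x*` combine into `f(yₖ) + αₖ ⟪∇f(yₖ), x* - zₖ⟫ ≤ (1 - αₖ) f(xₖ) + αₖ f(x*)`.
Whichever branch NSA takes, `f(xₖ₊₁) ≤ f(yₖ - η∇f(yₖ))`, and by the descent lemma with
`Lη ≤ 2/3` this is at most `f(yₖ) - 2η/3 ‖∇f(yₖ)‖²`, which leaves the margin `η/6 ‖∇f(yₖ)‖²`.
Dividing by `γₖ₊₁` gives the claim.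
-/

open RealInnerProductSpace

section

variable {E : Type*} [NormedAddCommGroup E] [InnerProductSpace ℝ E] [CompleteSpace E] {f : E → ℝ}

theorem DifferentiableAt.hasDerivAt_comp_add_smul {u d : E} {t : ℝ}
    (hf : DifferentiableAt ℝ f (u + t • d)) :
    HasDerivAt (fun s : ℝ => f (u + s • d)) ⟪gradient f (u + t • d), d⟫ t := by
  have hline : HasDerivAt (fun s : ℝ => u + s • d) d t := by
    simpa using ((hasDerivAt_id t).smul_const d).const_add u
  exact hf.hasGradientAt.hasFDerivAt.comp_hasDerivAt t hline

theorem ConvexOn.add_inner_gradient_le (hconv : ConvexOn ℝ Set.univ f) {u : E}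
    (hf : DifferentiableAt ℝ f u) (v : E) :
    f u + ⟪gradient f u, v - u⟫ ≤ f v := by
  have hline : ConvexOn ℝ Set.univ (fun s : ℝ => f (u + s • (v - u))) := by
    refine (hconv.comp_affineMap (AffineMap.lineMap u v)).congr fun s _ => ?_
    simp [AffineMap.lineMap_apply, add_comm]
  have hderiv : HasDerivAt (fun s : ℝ => f (u + s • (v - u))) ⟪gradient f u, v - u⟫ 0 := by
    simpa using DifferentiableAt.hasDerivAt_comp_add_smul (t := 0) (d := v - u) (by simpa using hf)
  have hslope := hline.le_slope_of_hasDerivAt (Set.mem_univ 0) (Set.mem_univ 1) one_pos hderiv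
  simp only [slope_def_field, one_smul, zero_smul, add_zero, add_sub_cancel, sub_zero,
    div_one] at hslope
  linarith

theorem apply_le_add_inner_gradient_add_sq (hf : Differentiable ℝ f) {L : ℝ}
    (hlip : ∀ a b, ‖gradient f a - gradient f b‖ ≤ L * ‖a - b‖) (u v : E) :
    f v ≤ f u + ⟪gradient f u, v - u⟫ + L / 2 * ‖v - u‖ ^ 2 := by
  set d := v - u
  -- `ψ' t = ⟪∇f(u + t d) - ∇f(u), d⟫ - L t ‖d‖² ≤ 0` for `t ≥ 0`, so `ψ 1 ≤ ψ 0`.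
  set ψ : ℝ → ℝ := fun t => f (u + t • d) - t * ⟪gradient f u, d⟫ - L / 2 * t ^ 2 * ‖d‖ ^ 2
  have hderiv : ∀ t, HasDerivAt ψ
      (⟪gradient f (u + t • d), d⟫ - ⟪gradient f u, d⟫ - L * t * ‖d‖ ^ 2) t := by
    intro t
    have := (((hf (u + t • d)).hasDerivAt_comp_add_smul.sub
      ((hasDerivAt_id' t).mul_const ⟪gradient f u, d⟫)).sub
      ((((hasDerivAt_id' t).pow 2).const_mul (L / 2)).mul_const (‖d‖ ^ 2)))
    exact this.congr_deriv (by push_cast; ring)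
  have hnonpos : ∀ t ∈ interior (Set.Ici (0 : ℝ)),
      ⟪gradient f (u + t • d), d⟫ - ⟪gradient f u, d⟫ - L * t * ‖d‖ ^ 2 ≤ 0 := by
    intro t ht
    rw [interior_Ici, Set.mem_Ioi] at ht
    have hnorm : ‖u + t • d - u‖ = t * ‖d‖ := by
      rw [add_sub_cancel_left, norm_smul, Real.norm_of_nonneg ht.le]
    have hbound : ⟪gradient f (u + t • d), d⟫ - ⟪gradient f u, d⟫ ≤ L * t * ‖d‖ ^ 2 :=
      calc ⟪gradient f (u + t • d), d⟫ - ⟪gradient f u, d⟫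
        = ⟪gradient f (u + t • d) - gradient f u, d⟫ := (inner_sub_left _ _ _).symm
      _ ≤ ‖gradient f (u + t • d) - gradient f u‖ * ‖d‖ := real_inner_le_norm _ _
      _ ≤ L * (t * ‖d‖) * ‖d‖ := by
          rw [← hnorm]; exact mul_le_mul_of_nonneg_right (hlip _ _) (norm_nonneg d)
      _ = L * t * ‖d‖ ^ 2 := by ring
    linarith
  have hanti := antitoneOn_of_hasDerivWithinAt_nonpos (convex_Ici 0)
    (fun t _ => (hderiv t).continuousAt.continuousWithinAt)
    (fun t _ => (hderiv t).hasDerivWithinAt) hnonpos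
  have h01 := hanti Set.self_mem_Ici (Set.mem_Ici.mpr zero_le_one) zero_le_one
  simp only [ψ, d, one_smul, zero_smul, add_zero, add_sub_cancel] at h01
  linarith

theorem apply_sub_smul_gradient_le (hf : Differentiable ℝ f) {L : ℝ}
    (hlip : ∀ a b, ‖gradient f a - gradient f b‖ ≤ L * ‖a - b‖) (u : E) (η : ℝ) :
    f (u - η • gradient f u) ≤ f u - η * (1 - L * η / 2) * ‖gradient f u‖ ^ 2 := by
  have h := apply_le_add_inner_gradient_add_sq hf hlip u (u - η • gradient f u)
  rw [sub_sub_cancel_left, inner_neg_right, real_inner_smul_right, real_inner_self_eq_norm_sq,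
    norm_neg, norm_smul, mul_pow, Real.norm_eq_abs, sq_abs] at h
  linarith

theorem ConvexOn.apply_add_smul_inner_gradient_le (hconv : ConvexOn ℝ Set.univ f) {a : ℝ}
    (ha0 : 0 ≤ a) (ha1 : a ≤ 1) {x z : E} (hf : DifferentiableAt ℝ f ((1 - a) • x + a • z))
    (v : E) :
    f ((1 - a) • x + a • z) + a * ⟪gradient f ((1 - a) • x + a • z), v - z⟫
      ≤ (1 - a) * f x + a * f v := by
  set y := (1 - a) • x + a • z
  set g := gradient f y
  have hx := hconv.add_inner_gradient_le hf x
  have hv := hconv.add_inner_gradient_le hf v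
  have hsplit : a * ⟪g, v - z⟫ = (1 - a) * ⟪g, x - y⟫ + a * ⟪g, v - y⟫ := by
    simp only [← real_inner_smul_right, ← inner_add_right]
    congr 1
    simp only [y]
    module
  nlinarith [mul_le_mul_of_nonneg_left hx (sub_nonneg.mpr ha1), mul_le_mul_of_nonneg_left hv ha0]

theorem accelerated_step_energy_le (hconv : ConvexOn ℝ Set.univ f) (hf : Differentiable ℝ f)
    {L : ℝ} (hlip : ∀ a b, ‖gradient f a - gradient f b‖ ≤ L * ‖a - b‖)
    {a η : ℝ} (ha0 : 0 < a) (ha1 : a ≤ 1) (hη0 : 0 < η) (hLη : L * η ≤ 2 / 3)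
    {x y z x' z' : E} (hy : y = (1 - a) • x + a • z)
    (hz' : z' = z - (η / a) • gradient f y) (hx' : f x' ≤ f (y - η • gradient f y)) (v : E) :
    a ^ 2 / η / 2 * ‖z' - v‖ ^ 2 + (f x' - f v)
      ≤ a ^ 2 / η / 2 * ‖z - v‖ ^ 2 + (1 - a) * (f x - f v) - η / 6 * ‖gradient f y‖ ^ 2 := by
  set g := gradient f y
  have hdist : a ^ 2 / η / 2 * ‖z' - v‖ ^ 2
      = a ^ 2 / η / 2 * ‖z - v‖ ^ 2 + a * ⟪g, v - z⟫ + η / 2 * ‖g‖ ^ 2 := by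
    have : z' - v = (z - v) - (η / a) • g := by rw [hz']; abel
    rw [this, norm_sub_sq_real, real_inner_smul_right, norm_smul, mul_pow, Real.norm_eq_abs,
      sq_abs, real_inner_comm, ← neg_sub z v, inner_neg_right]
    field_simp
    ring
  have hcoupling := hconv.apply_add_smul_inner_gradient_le ha0.le ha1 (hy ▸ hf y) v
  rw [← hy] at hcoupling
  have hdescent := apply_sub_smul_gradient_le hf hlip y η
  have hstep : 2 * η / 3 * ‖g‖ ^ 2 ≤ η * (1 - L * η / 2) * ‖g‖ ^ 2 :=
    mul_le_mul_of_nonneg_right (by nlinarith) (sq_nonneg _)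
  linarith

end

theorem nsa_stmt_4_general (n : ℕ)
    (f : EuclideanSpace ℝ (Fin n) → ℝ)
    (hconv : ConvexOn ℝ Set.univ f)
    (hdiff : Differentiable ℝ f)
    (L : ℝ) (hL : 0 < L)
    (hlip : ∀ x x' : EuclideanSpace ℝ (Fin n),
      ‖gradient f x - gradient f x'‖ ≤ L * ‖x - x'‖)
    (xstar : EuclideanSpace ℝ (Fin n))
    (p : ℝ) (hp : 3 ≤ p)
    (η : ℝ) (hη0 : 0 < η) (hη : η ≤ 2 / (3 * L))
    (α : ℕ → ℝ) (hα : ∀ k : ℕ, α k = p / (k + p))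
    (x y z : ℕ → EuclideanSpace ℝ (Fin n))
    (hy : ∀ k, y k = (1 - α k) • x k + α k • z k)
    (hx : ∀ k, x (k + 1) =
      if f (y k - η • gradient f (y k)) ≤ f (x k - η • gradient f (x k))
      then y k - η • gradient f (y k)
      else x k - η • gradient f (x k))
    (hz : ∀ k, z (k + 1) = z k - (η / α k) • gradient f (y k))
    (γ : ℕ → ℝ) (hγ : ∀ k : ℕ, γ (k + 1) = (α k) ^ 2 / η)
    (Δ : ℕ → ℝ)
    (hΔ : ∀ k : ℕ, 1 ≤ k →
      Δ k = γ k / 2 * ‖z k - xstar‖ ^ 2 + (f (x k) - f xstar)) :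
    ∀ k : ℕ, 1 ≤ k →
      Δ (k + 1) / γ (k + 1) ≤
        Δ k / γ k
          + (1 / γ (k + 1) - α k / γ (k + 1) - 1 / γ k) * (f (x k) - f xstar)
          - η / (6 * γ (k + 1)) * ‖gradient f (y k)‖ ^ 2 := by
  intro k hk
  have hα_pos : ∀ j, 0 < α j := fun j => by rw [hα]; positivity
  have hα_le : α k ≤ 1 := by rw [hα, div_le_one (by positivity)]; linarith [k.cast_nonneg (α := ℝ)]
  have hγk : 0 < γ k := by
    obtain ⟨m, rfl⟩ := Nat.exists_eq_add_of_le' hk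
    rw [hγ]; exact div_pos (pow_pos (hα_pos m) 2) hη0
  have hγk' : 0 < γ (k + 1) := by rw [hγ]; exact div_pos (pow_pos (hα_pos k) 2) hη0
  have hLη : L * η ≤ 2 / 3 := by rw [le_div_iff₀ (by positivity)] at hη; linarith
  have hx' : f (x (k + 1)) ≤ f (y k - η • gradient f (y k)) := by
    rw [hx k]; split_ifs <;> linarith
  have hstep := accelerated_step_energy_le hconv hdiff hlip (hα_pos k) hα_le hη0 hLη (hy k)
    (hz k) hx' xstar
  rw [← hγ] at hstep
  calc Δ (k + 1) / γ (k + 1)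
      = (γ (k + 1) / 2 * ‖z (k + 1) - xstar‖ ^ 2 + (f (x (k + 1)) - f xstar)) / γ (k + 1) := by
        rw [hΔ (k + 1) (by omega)]
    _ ≤ (γ (k + 1) / 2 * ‖z k - xstar‖ ^ 2 + (1 - α k) * (f (x k) - f xstar)
          - η / 6 * ‖gradient f (y k)‖ ^ 2) / γ (k + 1) := by gcongr
    _ = _ := by rw [hΔ k hk]; field_simp; ring

theorem nsa_stmt_4 (n : ℕ) (hn : 1 ≤ n)
    (f : EuclideanSpace ℝ (Fin n) → ℝ)
    (hconv : ConvexOn ℝ Set.univ f)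
    (hdiff : Differentiable ℝ f)
    (L : ℝ) (hL : 0 < L)
    (hlip : ∀ x x' : EuclideanSpace ℝ (Fin n),
      ‖gradient f x - gradient f x'‖ ≤ L * ‖x - x'‖)
    (xstar : EuclideanSpace ℝ (Fin n)) (hmin : ∀ u, f xstar ≤ f u)
    (p : ℝ) (hp : 3 ≤ p)
    (η : ℝ) (hη0 : 0 < η) (hη : η ≤ 2 / (3 * L))
    (α : ℕ → ℝ) (hα : ∀ k : ℕ, α k = p / (k + p))
    (x y z : ℕ → EuclideanSpace ℝ (Fin n))
    (hx0 : x 0 = z 0)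
    (hy : ∀ k, y k = (1 - α k) • x k + α k • z k)
    (hx : ∀ k, x (k + 1) =
      if f (y k - η • gradient f (y k)) ≤ f (x k - η • gradient f (x k))
      then y k - η • gradient f (y k)
      else x k - η • gradient f (x k))
    (hz : ∀ k, z (k + 1) = z k - (η / α k) • gradient f (y k))
    (γ : ℕ → ℝ) (hγ : ∀ k : ℕ, γ (k + 1) = (α k) ^ 2 / η)
    (Δ : ℕ → ℝ)
    (hΔ : ∀ k : ℕ, 1 ≤ k →
      Δ k = γ k / 2 * ‖z k - xstar‖ ^ 2 + (f (x k) - f xstar)) :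
    ∀ k : ℕ, 1 ≤ k →
      Δ (k + 1) / γ (k + 1) ≤
        Δ k / γ k
          + (1 / γ (k + 1) - α k / γ (k + 1) - 1 / γ k) * (f (x k) - f xstar)
          - η / (6 * γ (k + 1)) * ‖gradient f (y k)‖ ^ 2 :=
  nsa_stmt_4_general n f hconv hdiff L hL hlip xstar p hp η hη0 hη α hα x y z hy hx hz γ hγ Δ hΔ
end

section
/- Along the continuous-time NSA dynamics, the energy E(t) = (p²/2)·‖Z(t) − x*‖² + t²·(f(X(t)) − f*) is nonincreasing on (0,∞); indeed E is differentiable with E'(t) = −c·t²·‖∇f(X(t))‖² + (p−2)·t·⟨∇f(X(t)), x* − X(t)⟩ ≤ 0 for all t > 0. -/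
/-!
Differentiating `E` and substituting the two ODEs, the terms in `⟪∇f(X), Z - x*⟫` cancel and
`E' = 2t(f(X) - f*) + p t ⟪∇f(X), x* - X⟫ - c t² ‖∇f(X)‖²`. The first-order convexity inequality
`⟪∇f(X), x* - X⟫ ≤ f* - f(X)` (obtained by restricting `f` to a segment) turns this into the
stated bound, which is `≤ 0` because `x*` minimizes `f` and `p ≥ 2`. Monotonicity then follows
from the mean value theorem.
-/

open scoped RealInnerProductSpace

open Set

theorem ConvexOn.le_sub_of_hasFDerivAt {E : Type*} [NormedAddCommGroup E] [NormedSpace ℝ E]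
    {s : Set E} {f : E → ℝ} {f' : E →L[ℝ] ℝ} {x y : E} (hf : ConvexOn ℝ s f)
    (hx : x ∈ s) (hy : y ∈ s) (hf' : HasFDerivAt f f' x) :
    f' (y - x) ≤ f y - f x := by
  have hline : HasDerivAt (AffineMap.lineMap x y : ℝ →ᵃ[ℝ] E) (y - x) 0 := by
    simpa using AffineMap.hasDerivAt_lineMap (a := x) (b := y) (x := (0 : ℝ))
  have hφ : HasDerivAt (f ∘ (AffineMap.lineMap x y : ℝ →ᵃ[ℝ] E)) (f' (y - x)) 0 :=
    hf'.comp_hasDerivAt_of_eq 0 hline (by simp)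
  have hslope := (hf.comp_affineMap (AffineMap.lineMap x y : ℝ →ᵃ[ℝ] E)).le_slope_of_hasDerivAt
    (by simpa using hx) (by simpa using hy) one_pos hφ
  simpa [slope_def_field] using hslope

theorem antitoneOn_Ioi_of_hasDerivAt_nonpos {E : ℝ → ℝ} {a : ℝ}
    (h : ∀ t, a < t → ∃ d, HasDerivAt E d t ∧ d ≤ 0) : AntitoneOn E (Ioi a) := by
  choose! E' hE' hE'_nonpos using h
  refine antitoneOn_of_hasDerivWithinAt_nonpos (f' := E') (convex_Ioi a)
    (fun t ht => (hE' t ht).continuousAt.continuousWithinAt) (fun t ht => ?_) (fun t ht => ?_)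
  · rw [interior_Ioi] at ht ⊢
    exact (hE' t ht).hasDerivWithinAt
  · rw [interior_Ioi] at ht
    exact hE'_nonpos t ht

section NSAEnergy

variable {H : Type*} [NormedAddCommGroup H] [InnerProductSpace ℝ H]

theorem nsa_energy_rate_eq {p c t : ℝ} {x z x' z' g xstar : H} (hp : p ≠ 0)
    (hode1 : t • x' + p • (x - z) + (c * t) • g = 0) (hode2 : z' + (t / p) • g = 0) :
    p ^ 2 * ⟪z - xstar, z'⟫ + t ^ 2 * ⟪g, x'⟫ = p * t * ⟪g, xstar - x⟫ - c * t ^ 2 * ‖g‖ ^ 2 := by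
  have hz' : z' = -((t / p) • g) := eq_neg_of_add_eq_zero_left hode2
  have hx' : ⟪g, t • x'⟫ = -(p * ⟪g, x - z⟫ + c * t * ‖g‖ ^ 2) := by
    rw [show t • x' = -(p • (x - z) + (c * t) • g) from eq_neg_of_add_eq_zero_left
      (by rw [← add_assoc]; exact hode1)]
    simp only [inner_neg_right, inner_add_right, real_inner_smul_right, real_inner_self_eq_norm_sq]
  rw [real_inner_smul_right, inner_sub_right] at hx'
  rw [hz', inner_neg_right, real_inner_smul_right, real_inner_comm, inner_sub_right,
    inner_sub_right]
  have hpt : p ^ 2 * (t / p) = p * t := by rw [sq, mul_assoc, mul_div_cancel₀ t hp]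
  linear_combination t * hx' - (⟪g, z⟫ - ⟪g, xstar⟫) * hpt

theorem nsa_dissipation_nonpos {p c t : ℝ} {g x xstar : H} (hp : 2 ≤ p) (hc : 0 ≤ c) (ht : 0 ≤ t)
    (hg : ⟪g, xstar - x⟫ ≤ 0) :
    -c * t ^ 2 * ‖g‖ ^ 2 + (p - 2) * t * ⟪g, xstar - x⟫ ≤ 0 := by
  have hdamp : 0 ≤ c * t ^ 2 * ‖g‖ ^ 2 := by positivity
  have hdrift : (p - 2) * t * ⟪g, xstar - x⟫ ≤ 0 :=
    mul_nonpos_of_nonneg_of_nonpos (mul_nonneg (sub_nonneg.2 hp) ht) hg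
  linarith

variable [CompleteSpace H]

theorem ConvexOn.inner_gradient_le_sub {f : H → ℝ} {g x : H} (hf : ConvexOn ℝ univ f)
    (hg : HasGradientAt f g x) (y : H) : ⟪g, y - x⟫ ≤ f y - f x :=
  hf.le_sub_of_hasFDerivAt (mem_univ x) (mem_univ y) hg

noncomputable def nsaEnergy (p : ℝ) (f : H → ℝ) (xstar : H) (X Z : ℝ → H) (t : ℝ) : ℝ :=
  p ^ 2 / 2 * ‖Z t - xstar‖ ^ 2 + t ^ 2 * (f (X t) - f xstar)

theorem hasDerivAt_nsaEnergy {p t : ℝ} {f : H → ℝ} {xstar g x' z' : H} {X Z : ℝ → H}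
    (hX : HasDerivAt X x' t) (hZ : HasDerivAt Z z' t) (hf : HasGradientAt f g (X t)) :
    HasDerivAt (nsaEnergy p f xstar X Z)
      (p ^ 2 * ⟪Z t - xstar, z'⟫ + 2 * t * (f (X t) - f xstar) + t ^ 2 * ⟪g, x'⟫) t := by
  have hnorm : HasDerivAt (fun τ => ‖Z τ - xstar‖ ^ 2) (2 * ⟪Z t - xstar, z'⟫) t := by
    simpa using (hZ.sub_const xstar).norm_sq
  have hfX : HasDerivAt (fun τ => f (X τ)) ⟪g, x'⟫ t := hf.hasFDerivAt.comp_hasDerivAt t hX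
  refine ((hnorm.const_mul (p ^ 2 / 2)).add
    ((hasDerivAt_pow 2 t).mul (hfX.sub_const (f xstar)))).congr_deriv ?_
  norm_num
  ring

theorem hasDerivAt_nsaEnergy_le {p c t : ℝ} {f : H → ℝ} {xstar g x' z' : H} {X Z : ℝ → H}
    (hf : ConvexOn ℝ univ f) (hp : p ≠ 0) (ht : 0 ≤ t) (hX : HasDerivAt X x' t)
    (hZ : HasDerivAt Z z' t) (hg : HasGradientAt f g (X t))
    (hode1 : t • x' + p • (X t - Z t) + (c * t) • g = 0) (hode2 : z' + (t / p) • g = 0) :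
    ∃ d, HasDerivAt (nsaEnergy p f xstar X Z) d t ∧
      d ≤ -c * t ^ 2 * ‖g‖ ^ 2 + (p - 2) * t * ⟪g, xstar - X t⟫ := by
  refine ⟨_, hasDerivAt_nsaEnergy hX hZ hg, ?_⟩
  have hrate := nsa_energy_rate_eq (xstar := xstar) hp hode1 hode2
  have hsupport := mul_le_mul_of_nonneg_left (hf.inner_gradient_le_sub hg xstar) ht
  linarith

end NSAEnergy

theorem nsa_stmt_14_general (n : ℕ)
    (f : EuclideanSpace ℝ (Fin n) → ℝ)
    (hconv : ConvexOn ℝ Set.univ f)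
    (hdiff : ContDiff ℝ 1 f)
    (xstar : EuclideanSpace ℝ (Fin n)) (hmin : ∀ u, f xstar ≤ f u)
    (p c : ℝ) (hp : 2 ≤ p) (hc : 0 < c)
    (X Z X' Z' : ℝ → EuclideanSpace ℝ (Fin n))
    (hX : ∀ t : ℝ, 0 < t → HasDerivAt X (X' t) t)
    (hZ : ∀ t : ℝ, 0 < t → HasDerivAt Z (Z' t) t)
    (hode1 : ∀ t : ℝ, 0 < t →
      t • X' t + p • (X t - Z t) + (c * t) • gradient f (X t) = 0)
    (hode2 : ∀ t : ℝ, 0 < t →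
      Z' t + (t / p) • gradient f (X t) = 0) :
    (∀ t : ℝ, 0 < t → ∃ d : ℝ,
      HasDerivAt
        (fun τ : ℝ => p ^ 2 / 2 * ‖Z τ - xstar‖ ^ 2 + τ ^ 2 * (f (X τ) - f xstar))
        d t ∧
      d ≤ -c * t ^ 2 * ‖gradient f (X t)‖ ^ 2
            + (p - 2) * t * ⟪gradient f (X t), xstar - X t⟫ ∧
      -c * t ^ 2 * ‖gradient f (X t)‖ ^ 2
            + (p - 2) * t * ⟪gradient f (X t), xstar - X t⟫ ≤ 0) ∧
    (∀ t₀ t : ℝ, 0 < t₀ → t₀ ≤ t →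
      p ^ 2 / 2 * ‖Z t - xstar‖ ^ 2 + t ^ 2 * (f (X t) - f xstar) ≤
        p ^ 2 / 2 * ‖Z t₀ - xstar‖ ^ 2 + t₀ ^ 2 * (f (X t₀) - f xstar)) := by
  have hgrad (x) : HasGradientAt f (gradient f x) x :=
    (hdiff.differentiable one_ne_zero x).hasGradientAt
  have hderiv (t) (ht : 0 < t) := hasDerivAt_nsaEnergy_le (xstar := xstar) hconv
    (by positivity : p ≠ 0) ht.le (hX t ht) (hZ t ht) (hgrad (X t)) (hode1 t ht) (hode2 t ht)
  have hdissip (t) (ht : 0 < t) := nsa_dissipation_nonpos hp hc.le ht.le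
    ((hconv.inner_gradient_le_sub (hgrad (X t)) xstar).trans (sub_nonpos.2 (hmin (X t))))
  refine ⟨fun t ht => ?_, fun t₀ t ht₀ hle => ?_⟩
  · obtain ⟨d, hd, hd_le⟩ := hderiv t ht
    exact ⟨d, hd, hd_le, hdissip t ht⟩
  · refine antitoneOn_Ioi_of_hasDerivAt_nonpos (E := nsaEnergy p f xstar X Z) (fun t ht => ?_)
      ht₀ (ht₀.trans_le hle) hle
    obtain ⟨d, hd, hd_le⟩ := hderiv t ht
    exact ⟨d, hd, hd_le.trans (hdissip t ht)⟩

/-- Along the continuous-time NSA dynamics, the energy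
`E(t) = (p²/2)‖Z(t) - x*‖² + t²(f(X(t)) - f*)` is differentiable with
derivative bounded by `-c t² ‖∇f(X(t))‖² + (p-2) t ⟨∇f(X(t)), x* - X(t)⟩ ≤ 0`,
and is nonincreasing on `(0, ∞)`. -/
theorem nsa_stmt_14 (n : ℕ) (hn : 1 ≤ n)
    (f : EuclideanSpace ℝ (Fin n) → ℝ)
    (hconv : ConvexOn ℝ Set.univ f)
    (hdiff : ContDiff ℝ 1 f)
    (xstar : EuclideanSpace ℝ (Fin n)) (hmin : ∀ u, f xstar ≤ f u)
    (p c : ℝ) (hp : 2 ≤ p) (hc : 0 < c)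
    (X Z X' Z' : ℝ → EuclideanSpace ℝ (Fin n))
    (hX : ∀ t : ℝ, 0 < t → HasDerivAt X (X' t) t)
    (hZ : ∀ t : ℝ, 0 < t → HasDerivAt Z (Z' t) t)
    (hode1 : ∀ t : ℝ, 0 < t →
      t • X' t + p • (X t - Z t) + (c * t) • gradient f (X t) = 0)
    (hode2 : ∀ t : ℝ, 0 < t →
      Z' t + (t / p) • gradient f (X t) = 0) :
    (∀ t : ℝ, 0 < t → ∃ d : ℝ,
      HasDerivAt
        (fun τ : ℝ => p ^ 2 / 2 * ‖Z τ - xstar‖ ^ 2 + τ ^ 2 * (f (X τ) - f xstar))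
        d t ∧
      d ≤ -c * t ^ 2 * ‖gradient f (X t)‖ ^ 2
            + (p - 2) * t * ⟪gradient f (X t), xstar - X t⟫ ∧
      -c * t ^ 2 * ‖gradient f (X t)‖ ^ 2
            + (p - 2) * t * ⟪gradient f (X t), xstar - X t⟫ ≤ 0) ∧
    (∀ t₀ t : ℝ, 0 < t₀ → t₀ ≤ t →
      p ^ 2 / 2 * ‖Z t - xstar‖ ^ 2 + t ^ 2 * (f (X t) - f xstar) ≤
        p ^ 2 / 2 * ‖Z t₀ - xstar‖ ^ 2 + t₀ ^ 2 * (f (X t₀) - f xstar)) :=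
  nsa_stmt_14_general n f hconv hdiff xstar hmin p c hp hc X Z X' Z' hX hZ hode1 hode2
end
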